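/- arXiv:math/0603251 — 2 statements merged into one kernel-verified Lean document; each statement's English description precedes it below -/
import Mathlib

section
/- Let a ∈ ℍⁿ be a nonzero quaternion vector and v ∈ ℝⁿ a real vector with ‖v‖ = 1. Set α = ‖a‖, r = |∑ᵢ aᵢ vᵢ|, ζ = 1 if r = 0 and ζ = −(∑ᵢ aᵢ vᵢ)/r if r > 0, μ = √(α(α + r)), and define u ∈ ℍⁿ by uᵢ = (aᵢ − ζ vᵢ α)/μ. Then |ζ| = 1, ‖u‖ = √2, and for every index i, ζ⁻¹ * (aᵢ − uᵢ * (∑ⱼ (star uⱼ) * aⱼ)) = α vᵢ; i.e., this explicit construction realizes the left quaternion Householder transformation sending a to ‖a‖ v. -/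
/-!
Put `s = ∑ aᵢ vᵢ`, so that `s = -ζ r` with `|ζ| = 1`, and `w = a - ζ α v = μ u`. For the
quaternionic form `⟨x, y⟩ = ∑ x̄ᵢ yᵢ`, the reality of `v` lets `ζ` and `α` be pulled out:
`⟨ζ α v, a⟩ = α ζ̄ s = -α r`, `⟨a, ζ α v⟩ = α s̄ ζ = -α r` and `⟨ζ α v, ζ α v⟩ = α²`. Hence
`⟨w, a⟩ = α² + α r = μ²` and `⟨w, w⟩ = 2 μ²`, i.e. `⟨u, a⟩ = μ` and `‖u‖² = 2`, so that
`a - u ⟨u, a⟩ = a - μ u = ζ α v`.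
-/

open scoped Quaternion

namespace Quaternion

theorem coe_sum {ι : Type*} (s : Finset ι) (f : ι → ℝ) :
    ((∑ i ∈ s, f i : ℝ) : ℍ) = ∑ i ∈ s, (f i : ℍ) :=
  map_sum (algebraMap ℝ ℍ) f s

theorem star_mul_self_eq_coe_norm_sq (q : ℍ) : star q * q = ((‖q‖ ^ 2 : ℝ) : ℍ) := by
  rw [star_mul_self, normSq_eq_norm_mul_self, sq]

variable {ι : Type*} [Fintype ι]

theorem star_dotProduct_self (x : ι → ℍ) :
    star x ⬝ᵥ x = ((∑ i, ‖x i‖ ^ 2 : ℝ) : ℍ) := by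
  simp only [dotProduct, Pi.star_apply, star_mul_self_eq_coe_norm_sq, coe_sum]

theorem star_mul_real_dotProduct (ζ : ℍ) (α : ℝ) (v : ι → ℝ) (a : ι → ℍ) :
    star (fun i ↦ ζ * v i * α) ⬝ᵥ a = α • (star ζ * ∑ i, a i * v i) := by
  simp only [dotProduct, Pi.star_apply, star_mul, star_coe, Finset.mul_sum, Finset.smul_sum]
  refine Finset.sum_congr rfl fun i _ ↦ ?_
  simp only [coe_mul_eq_smul, mul_coe_eq_smul, smul_mul_assoc, mul_smul_comm, smul_smul, mul_comm]

theorem star_dotProduct_mul_real (ζ : ℍ) (α : ℝ) (v : ι → ℝ) (a : ι → ℍ) :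
    star a ⬝ᵥ (fun i ↦ ζ * v i * α) = α • (star (∑ i, a i * v i) * ζ) := by
  rw [Matrix.star_dotProduct, star_mul_real_dotProduct, star_smul, star_mul, star_star]

theorem star_mul_real_dotProduct_self {ζ : ℍ} (hζ : ‖ζ‖ = 1) (α : ℝ) {v : ι → ℝ}
    (hv : ∑ i, v i ^ 2 = 1) :
    star (fun i ↦ ζ * v i * α) ⬝ᵥ (fun i ↦ ζ * v i * α) = ((α ^ 2 : ℝ) : ℍ) := by
  rw [star_dotProduct_self]
  congr 1
  simp only [norm_mul, norm_coe, hζ, Real.norm_eq_abs, one_mul, mul_pow, sq_abs, ← Finset.sum_mul,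
    hv]

theorem star_mul_eq_neg_of_eq_neg_mul {ζ s : ℍ} {r : ℝ} (hζ : ‖ζ‖ = 1) (hs : s = -ζ * r) :
    star ζ * s = -r := by
  rw [hs, neg_mul, mul_neg, ← mul_assoc, star_mul_self_eq_coe_norm_sq, hζ, one_pow, coe_one,
    one_mul]

section Householder

variable {a : ι → ℍ} {v : ι → ℝ} {ζ : ℍ} {α r : ℝ}

theorem star_sub_mul_real_dotProduct (hζ : ‖ζ‖ = 1) (hs : ∑ i, a i * v i = -ζ * r)
    (hα : ∑ i, ‖a i‖ ^ 2 = α ^ 2) :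
    star (a - fun i ↦ ζ * v i * α) ⬝ᵥ a = ((α * (α + r) : ℝ) : ℍ) := by
  rw [star_sub, sub_dotProduct, star_dotProduct_self, star_mul_real_dotProduct,
    star_mul_eq_neg_of_eq_neg_mul hζ hs, hα, smul_neg, ← coe_mul_eq_smul, ← coe_mul,
    sub_neg_eq_add, ← coe_add]
  ring_nf

theorem sum_norm_sub_mul_real_sq (hζ : ‖ζ‖ = 1) (hs : ∑ i, a i * v i = -ζ * r)
    (hα : ∑ i, ‖a i‖ ^ 2 = α ^ 2) (hv : ∑ i, v i ^ 2 = 1) :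
    ∑ i, ‖(a - fun i ↦ ζ * v i * α) i‖ ^ 2 = 2 * (α * (α + r)) := by
  have hsζ : star (∑ i, a i * v i) * ζ = -r := by
    simpa using congrArg star (star_mul_eq_neg_of_eq_neg_mul hζ hs)
  apply coe_injective
  rw [← star_dotProduct_self, dotProduct_sub, star_sub_mul_real_dotProduct hζ hs hα, star_sub,
    sub_dotProduct, star_dotProduct_mul_real, star_mul_real_dotProduct_self hζ α hv, hsζ, smul_neg,
    ← coe_mul_eq_smul, ← coe_mul, ← coe_neg, ← coe_sub, ← coe_sub]
  ring_nf

theorem sum_star_smul_sub_mul_real_mul {μ : ℝ} (hζ : ‖ζ‖ = 1) (hs : ∑ i, a i * v i = -ζ * r)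
    (hα : ∑ i, ‖a i‖ ^ 2 = α ^ 2) (hμ : μ ^ 2 = α * (α + r)) (hμ₀ : 0 < μ) :
    ∑ i, star ((μ⁻¹ • (a - fun i ↦ ζ * v i * α)) i) * a i = μ := by
  simp only [Pi.smul_apply, Quaternion.star_smul, smul_mul_assoc, ← Finset.smul_sum]
  change μ⁻¹ • (star (a - fun i ↦ ζ * v i * α) ⬝ᵥ a) = μ
  rw [star_sub_mul_real_dotProduct hζ hs hα, ← hμ, ← coe_mul_eq_smul, ← coe_mul]
  congr 1
  field_simp

theorem sum_norm_smul_sub_mul_real_sq {μ : ℝ} (hζ : ‖ζ‖ = 1) (hs : ∑ i, a i * v i = -ζ * r)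
    (hα : ∑ i, ‖a i‖ ^ 2 = α ^ 2) (hv : ∑ i, v i ^ 2 = 1) (hμ : μ ^ 2 = α * (α + r))
    (hμ₀ : 0 < μ) :
    ∑ i, ‖(μ⁻¹ • (a - fun i ↦ ζ * v i * α)) i‖ ^ 2 = 2 := by
  simp only [Pi.smul_apply, norm_smul, mul_pow, ← Finset.mul_sum,
    sum_norm_sub_mul_real_sq hζ hs hα hv, ← hμ, norm_inv, Real.norm_eq_abs, abs_of_pos hμ₀]
  field_simp

end Householder

noncomputable def negPhase (s : ℍ) : ℍ := if ‖s‖ = 0 then 1 else -s / (‖s‖ : ℍ)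

theorem norm_negPhase (s : ℍ) : ‖negPhase s‖ = 1 := by
  unfold negPhase
  split_ifs with h
  · exact norm_one
  · rw [norm_div, norm_neg, norm_coe, norm_norm, div_self h]

theorem eq_neg_negPhase_mul_norm (s : ℍ) : s = -negPhase s * (‖s‖ : ℍ) := by
  unfold negPhase
  split_ifs with h
  · simp [norm_eq_zero.mp h]
  · rw [neg_div, neg_neg, div_mul_cancel₀ _ (coe_injective.ne h)]

end Quaternion

open Quaternion

/-- The explicit construction of the **left** quaternion Householder vector and scalar
(equations (10)–(14) of the paper): for a nonzero quaternion vector `a` and a real unit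
vector `v`, the construction yields a unit quaternion `ζ` and a vector `u` of norm `√2`
such that `ζ⁻¹ (I - u ūᵀ) a = ‖a‖ v`. -/
theorem left_quaternion_householder_construction (n : ℕ) (a : Fin n → Quaternion ℝ)
    (ha : a ≠ 0) (v : Fin n → ℝ) (hv : Real.sqrt (∑ i, (v i) ^ 2) = 1)
    (α : ℝ) (hα : α = Real.sqrt (∑ i, ‖a i‖ ^ 2))
    (r : ℝ) (hr : r = ‖∑ i, a i * ((v i : ℝ) : Quaternion ℝ)‖)
    (ζ : Quaternion ℝ)
    (hζ : ζ = if r = 0 then 1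
      else -(∑ i, a i * ((v i : ℝ) : Quaternion ℝ)) / ((r : ℝ) : Quaternion ℝ))
    (μ : ℝ) (hμ : μ = Real.sqrt (α * (α + r)))
    (u : Fin n → Quaternion ℝ)
    (hu : ∀ i, u i =
      (a i - ζ * ((v i : ℝ) : Quaternion ℝ) * ((α : ℝ) : Quaternion ℝ)) / ((μ : ℝ) : Quaternion ℝ)) :
    ‖ζ‖ = 1 ∧ Real.sqrt (∑ i, ‖u i‖ ^ 2) = Real.sqrt 2 ∧
      ∀ i, ζ⁻¹ * (a i - u i * (∑ j, star (u j) * a j)) =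
        ((α : ℝ) : Quaternion ℝ) * ((v i : ℝ) : Quaternion ℝ) := by
  subst hr
  replace hζ : ζ = negPhase _ := hζ
  have hζ1 : ‖ζ‖ = 1 := hζ ▸ norm_negPhase _
  set s := ∑ i, a i * (v i : ℍ)
  have hs : s = -ζ * ‖s‖ := hζ ▸ eq_neg_negPhase_mul_norm s
  have hv1 : ∑ i, v i ^ 2 = 1 := Real.sqrt_eq_one.mp hv
  have hα2 : ∑ i, ‖a i‖ ^ 2 = α ^ 2 := hα ▸ (Real.sq_sqrt (by positivity)).symm
  have hαpos : 0 < α := by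
    obtain ⟨i, hi⟩ := Function.ne_iff.mp ha
    exact hα ▸ Real.sqrt_pos.mpr (Finset.sum_pos' (fun j _ ↦ by positivity)
      ⟨i, Finset.mem_univ i, pow_pos (norm_pos_iff.mpr hi) 2⟩)
  have hμ2 : μ ^ 2 = α * (α + ‖s‖) := hμ ▸ Real.sq_sqrt (by positivity)
  have hμpos : 0 < μ := hμ ▸ Real.sqrt_pos.mpr (by positivity)
  have hu' : u = μ⁻¹ • (a - fun i ↦ ζ * v i * α) := funext fun i ↦ by
    rw [hu i, div_eq_mul_inv, ← coe_inv, mul_coe_eq_smul]; rfl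
  have hua : ∑ j, star (u j) * a j = μ :=
    hu' ▸ sum_star_smul_sub_mul_real_mul hζ1 hs hα2 hμ2 hμpos
  refine ⟨hζ1, by rw [hu', sum_norm_smul_sub_mul_real_sq hζ1 hs hα2 hv1 hμ2 hμpos], fun i ↦ ?_⟩
  rw [hua, hu i, div_mul_cancel₀ _ (coe_injective.ne hμpos.ne'), sub_sub_cancel, mul_assoc,
    inv_mul_cancel_left₀ (norm_ne_zero_iff.mp (hζ1 ▸ one_ne_zero)), coe_commutes]
end

section
/- Let A be an r × c quaternion matrix with r ≥ 1 and c ≥ 1, and let a denote its first row. Then there exists a unitary quaternion matrix G ∈ ℍ^{c×c} such that the product A * G has first row equal to ‖a‖ times the first standard basis (row) vector: (A * G) 0 j = 0 for all j ≠ 0, and (A * G) 0 0 equals the real quaternion ‖a‖ (in particular it has zero vector part and is nonnegative). -/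
/-!
Right multiplication by the scalar unit `u` with `a₀ u = ‖a₀‖` turns the first row `a` into a row
`x` of the same length whose cross term with `y = ‖a‖ e₀` is real. Two rows of equal length with
a real cross term are exchanged by the Householder reflection `1 - 2P`, `P` the projection onto
`x - y`: the hypotheses give `2 ⟪x, x - y⟫ = ‖x - y‖²`, so `x P = (x - y) / 2`.
-/

open Matrix

namespace Matrix

variable {ι R : Type*} [Fintype ι]

section DivisionRing

variable [DivisionRing R] [StarRing R]

/-- The orthogonal projection onto the line `R v`, acting on row vectors from the right. -/
def rowProjection (v : ι → R) : Matrix ι ι R :=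
  vecMulVec (star v) ((v ⬝ᵥ star v)⁻¹ • v)

theorem isStarProjection_rowProjection {v : ι → R} (hv : v ⬝ᵥ star v ≠ 0) :
    IsStarProjection (rowProjection v) where
  isIdempotentElem := by
    rw [IsIdempotentElem, rowProjection, vecMulVec_mul_vecMulVec, smul_dotProduct, smul_eq_mul,
      inv_mul_cancel₀ hv, one_smul]
  isSelfAdjoint := by
    have hstar : star (v ⬝ᵥ star v) = v ⬝ᵥ star v := by rw [← dotProduct_star]
    rw [IsSelfAdjoint, rowProjection, star_eq_conjTranspose, conjTranspose_vecMulVec]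
    ext i j
    simp [vecMulVec_apply, star_inv₀, hstar, mul_assoc]

variable [DecidableEq ι]

def householder (v : ι → R) : Matrix ι ι R :=
  1 - 2 * rowProjection v

theorem householder_mem_unitary {v : ι → R} (hv : v ⬝ᵥ star v ≠ 0) :
    householder v ∈ unitary (Matrix ι ι R) := by
  rw [householder]
  convert (isStarProjection_rowProjection hv).one_sub.two_mul_sub_one_mem_unitary using 1
  noncomm_ring

theorem vecMul_householder_sub {x y : ι → R} (hnorm : x ⬝ᵥ star x = y ⬝ᵥ star y)
    (hself : x ⬝ᵥ star y = y ⬝ᵥ star x) (hxy : (x - y) ⬝ᵥ star (x - y) ≠ 0) :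
    x ᵥ* householder (x - y) = y := by
  set v := x - y
  have hhalf : x ⬝ᵥ star v + x ⬝ᵥ star v = v ⬝ᵥ star v := by
    simp only [v, star_sub, dotProduct_sub, sub_dotProduct, hnorm, hself]
    abel
  rw [householder, vecMul_sub, vecMul_one, two_mul, vecMul_add, rowProjection, vecMul_vecMulVec,
    ← add_smul, smul_smul, hhalf, mul_inv_cancel₀ hxy, one_smul, sub_sub_cancel]

end DivisionRing

variable [DecidableEq ι] [Ring R] [StarRing R]

theorem vecMul_dotProduct_star_vecMul_of_mem_unitary {U : Matrix ι ι R}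
    (hU : U ∈ unitary (Matrix ι ι R)) (a b : ι → R) :
    (a ᵥ* U) ⬝ᵥ star (b ᵥ* U) = a ⬝ᵥ star b := by
  rw [star_vecMul, ← dotProduct_mulVec, mulVec_mulVec, ← star_eq_conjTranspose,
    Unitary.mul_star_self_of_mem hU, one_mulVec]

theorem diagonal_mem_unitary {d : ι → R} (hd : ∀ i, d i ∈ unitary R) :
    diagonal d ∈ unitary (Matrix ι ι R) := by
  simp only [Unitary.mem_iff, star_eq_conjTranspose, diagonal_conjTranspose,
    diagonal_mul_diagonal, Pi.star_apply, Unitary.star_mul_self_of_mem (hd _),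
    Unitary.mul_star_self_of_mem (hd _), diagonal_one, and_self]

end Matrix

namespace Quaternion

variable {ι : Type*} [Fintype ι]

theorem dotProduct_self_star (v : ι → ℍ[ℝ]) :
    v ⬝ᵥ star v = ((∑ k, ‖v k‖ ^ 2 : ℝ) : ℍ[ℝ]) := by
  simp only [dotProduct, Pi.star_apply, self_mul_star, normSq_eq_norm_mul_self, ← sq]
  exact (map_sum (algebraMap ℝ ℍ[ℝ]) _ _).symm

theorem dotProduct_self_star_eq_zero {v : ι → ℍ[ℝ]} : v ⬝ᵥ star v = 0 ↔ v = 0 := by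
  rw [dotProduct_self_star, ← coe_zero, coe_inj,
    Finset.sum_eq_zero_iff_of_nonneg fun _ _ ↦ sq_nonneg _]
  simp [funext_iff]

theorem exists_mem_unitary_mul_eq_norm (q : ℍ[ℝ]) : ∃ u ∈ unitary ℍ[ℝ], q * u = ‖q‖ := by
  rcases eq_or_ne q 0 with rfl | hq
  · exact ⟨1, one_mem _, by simp⟩
  have hq' : ‖q‖ ≠ 0 := norm_ne_zero_iff.2 hq
  set u := ‖q‖⁻¹ • star q
  have hu : normSq u = 1 := by
    rw [normSq_eq_norm_mul_self, norm_smul, norm_star, norm_inv, norm_norm, inv_mul_cancel₀ hq',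
      one_mul]
  refine ⟨u, Unitary.mem_iff.2 ⟨?_, ?_⟩, ?_⟩
  · rw [star_mul_self, hu, coe_one]
  · rw [self_mul_star, hu, coe_one]
  · rw [mul_smul_comm, self_mul_star, normSq_eq_norm_mul_self, ← coe_mul_eq_smul, ← coe_mul,
      inv_mul_cancel_left₀ hq']

variable [DecidableEq ι]

theorem exists_mem_unitary_vecMul_eq {x y : ι → ℍ[ℝ]} (hnorm : x ⬝ᵥ star x = y ⬝ᵥ star y)
    (hself : x ⬝ᵥ star y = y ⬝ᵥ star x) : ∃ H ∈ unitary (Matrix ι ι ℍ[ℝ]), x ᵥ* H = y := by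
  rcases eq_or_ne x y with rfl | hxy
  · exact ⟨1, one_mem _, vecMul_one x⟩
  have hv : (x - y) ⬝ᵥ star (x - y) ≠ 0 := by
    rwa [Ne, dotProduct_self_star_eq_zero, sub_eq_zero]
  exact ⟨householder (x - y), householder_mem_unitary hv, vecMul_householder_sub hnorm hself hv⟩

theorem exists_mem_unitary_vecMul_eq_single (a : ι → ℍ[ℝ]) (z : ι) :
    ∃ G ∈ unitary (Matrix ι ι ℍ[ℝ]), a ᵥ* G = Pi.single z ((√(∑ k, ‖a k‖ ^ 2) : ℝ) : ℍ[ℝ]) := by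
  set β := √(∑ k, ‖a k‖ ^ 2)
  obtain ⟨u, hu, hazu⟩ := exists_mem_unitary_mul_eq_norm (a z)
  set D : Matrix ι ι ℍ[ℝ] := diagonal fun _ ↦ u
  have hD : D ∈ unitary (Matrix ι ι ℍ[ℝ]) := diagonal_mem_unitary fun _ ↦ hu
  set y : ι → ℍ[ℝ] := Pi.single z (β : ℍ[ℝ])
  have hnorm : (a ᵥ* D) ⬝ᵥ star (a ᵥ* D) = y ⬝ᵥ star y := by
    rw [vecMul_dotProduct_star_vecMul_of_mem_unitary hD, dotProduct_self_star, ← Pi.single_star,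
      single_dotProduct, Pi.single_eq_same, star_coe, ← coe_mul, Real.mul_self_sqrt (by positivity)]
  have hself : (a ᵥ* D) ⬝ᵥ star y = y ⬝ᵥ star (a ᵥ* D) := by
    rw [← Pi.single_star, dotProduct_single, single_dotProduct, Pi.star_apply, vecMul_diagonal,
      hazu, star_coe, star_coe, ← coe_mul, ← coe_mul, mul_comm]
  obtain ⟨H, hH, hxH⟩ := exists_mem_unitary_vecMul_eq hnorm hself
  exact ⟨D * H, mul_mem hD hH, by rw [← vecMul_vecMul, hxH]⟩

end Quaternion

/-- **Zeroing the first row** (the basic right-transformation step of the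
bidiagonalization, §3 of the paper): for any `r × c` quaternion matrix `A` (with
`r, c ≥ 1`) there is a unitary quaternion matrix `G` such that the first row of `A G` is
`‖a‖ e₁ᵀ`, where `a` is the first row of `A`: all entries after the first vanish and the
leading entry is the real number `‖a‖`. -/
theorem quaternion_householder_zeros_first_row (r c : ℕ) (hr : 1 ≤ r) (hc : 1 ≤ c)
    (A : Matrix (Fin r) (Fin c) (Quaternion ℝ)) :
    ∃ G : Matrix (Fin c) (Fin c) (Quaternion ℝ),
      G * Gᴴ = 1 ∧ Gᴴ * G = 1 ∧
      (∀ j : Fin c, j ≠ ⟨0, hc⟩ → (A * G) ⟨0, hr⟩ j = 0) ∧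
      (A * G) ⟨0, hr⟩ ⟨0, hc⟩ =
        ((Real.sqrt (∑ j, ‖A ⟨0, hr⟩ j‖ ^ 2) : ℝ) : Quaternion ℝ) := by
  obtain ⟨G, hG, hrow⟩ := Quaternion.exists_mem_unitary_vecMul_eq_single (A ⟨0, hr⟩) ⟨0, hc⟩
  refine ⟨G, Unitary.mul_star_self_of_mem hG, Unitary.star_mul_self_of_mem hG, fun j hj ↦ ?_, ?_⟩
  · rw [mul_apply_eq_vecMul, hrow, Pi.single_eq_of_ne hj]
  · rw [mul_apply_eq_vecMul, hrow, Pi.single_eq_same]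
end
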